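/- Let U be a Hilbert C*-module over a unital C*-algebra A and F : Ω → U weakly measurable. Then F is a continuous frame (i.e., there exist A₀, B > 0 with A₀⟨f,f⟩ ≤ ∫_Ω ⟨f,F(ω)⟩⟨F(ω),f⟩ dμ(ω) ≤ B⟨f,f⟩ in the order of A, for all f) if and only if there exist constants A₁, B₁ > 0 such that A₁‖⟨f,f⟩‖ ≤ ‖∫_Ω ⟨f,F(ω)⟩⟨F(ω),f⟩ dμ(ω)‖ ≤ B₁‖⟨f,f⟩‖ for all f ∈ U. -/

import Mathlib

open MeasureTheory CStarModule
open scoped RightActions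

/-- The Hilbert C⋆-module class as it stood in Mathlib (December 2024): right `Aᵐᵒᵖ`-action,
`⟪x, y <• a⟫ = ⟪x, y⟫ * a`. Mathlib's `CStarModule` now uses a left action with another
convention, so the old class is spelled out here. -/
class RightCStarModule (A E : Type*) [NonUnitalSemiring A] [StarRing A]
    [Module ℂ A] [AddCommGroup E] [Module ℂ E] [PartialOrder A] [SMul Aᵐᵒᵖ E] [Norm A] [Norm E]
    extends Inner A E where
  inner_add_right {x} {y} {z} : inner x (y + z) = inner x y + inner x z
  inner_self_nonneg {x} : 0 ≤ inner x x
  inner_self {x} : inner x x = 0 ↔ x = 0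
  inner_op_smul_right {a : A} {x y : E} : inner x (y <• a) = inner x y * a
  inner_smul_right_complex {z : ℂ} {x} {y} : inner x (z • y) = z • inner x y
  star_inner x y : star (inner x y) = inner y x
  norm_eq_sqrt_norm_inner_self x : ‖x‖ = Real.sqrt ‖inner x x‖

variable {A : Type*} [CStarAlgebra A] [PartialOrder A] [StarOrderedRing A]
variable {U : Type*} [NormedAddCommGroup U] [NormedSpace ℂ U] [CompleteSpace U]
  [SMul Aᵐᵒᵖ U] [RightCStarModule A U]
variable {Ω : Type*} [MeasurableSpace Ω]

local notation "⟪" x ", " y "⟫" => (inner A x y : A)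

/-- `F : Ω → U` is a continuous frame for the Hilbert C*-module `U` with bounds `A₀`, `B`. -/
def IsContinuousFrame (μ : Measure Ω) (F : Ω → U) (A₀ B : ℝ) : Prop :=
  0 < A₀ ∧ 0 < B ∧
  (∀ f : U, StronglyMeasurable fun ω => (inner A f (F ω) : A)) ∧
  (∀ f : U, Integrable (fun ω => (inner A f (F ω) : A) * inner A (F ω) f) μ) ∧
  ∀ f : U, A₀ • (inner A f f : A) ≤ (∫ ω, (inner A f (F ω) : A) * inner A (F ω) f ∂μ) ∧
    (∫ ω, (inner A f (F ω) : A) * inner A (F ω) f ∂μ) ≤ B • (inner A f f : A)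

/-- `F : Ω → U` is a continuous Bessel mapping with bound `B`. -/
def IsBessel (μ : Measure Ω) (F : Ω → U) (B : ℝ) : Prop :=
  0 < B ∧
  (∀ f : U, StronglyMeasurable fun ω => (inner A f (F ω) : A)) ∧
  (∀ f : U, Integrable (fun ω => (inner A f (F ω) : A) * inner A (F ω) f) μ) ∧
  ∀ f : U, (∫ ω, (inner A f (F ω) : A) * inner A (F ω) f ∂μ) ≤ B • (inner A f f : A)

/-- `φ : Ω → A` belongs to the Hilbert `A`-module `L²(Ω, A)`. -/
def MemL2 (μ : Measure Ω) (φ : Ω → A) : Prop :=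
  AEStronglyMeasurable φ μ ∧ Integrable (fun ω => star (φ ω) * φ ω) μ

/-- `G` is a dual of the continuous Bessel mapping `F` (weak reconstruction formula). -/
def IsDual (μ : Measure Ω) (F G : Ω → U) : Prop :=
  (∃ B : ℝ, IsBessel (A := A) μ G B) ∧
  ∀ f g : U, (inner A f g : A) = ∫ ω, (inner A f (G ω) : A) * inner A (F ω) g ∂μ

/-! Order bounds imply norm bounds since the norm is monotone on positive elements. Conversely,
replacing `f` by `f <• a` conjugates both `⟪f, f⟫` and the frame integral by `a`, so the norm
bounds hold between all conjugates `a * s * a` and `a * c * a` with `a ≥ 0`. Conjugating by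
`a = (c + ε)^(-1/2)` normalises `c` to norm at most one, which yields `s ≤ K • (c + ε)`, and
`ε → 0` gives `s ≤ K • c`. -/

lemma mul_norm_le_norm_of_smul_le {r : ℝ} {a b : A} (hr : 0 ≤ r) (ha : 0 ≤ a) (h : r • a ≤ b) :
    r * ‖a‖ ≤ ‖b‖ := by
  simpa [norm_smul, abs_of_nonneg hr] using
    CStarAlgebra.norm_le_norm_of_nonneg_of_le (smul_nonneg hr ha) h

lemma norm_le_mul_norm_of_le_smul {r : ℝ} {a b : A} (hr : 0 ≤ r) (hb : 0 ≤ b) (h : b ≤ r • a) :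
    ‖b‖ ≤ r * ‖a‖ := by
  simpa [norm_smul, abs_of_nonneg hr] using CStarAlgebra.norm_le_norm_of_nonneg_of_le hb h

lemma le_norm_conjugate_rpow_neg_one_half_smul {b s : A} (hb : IsStrictlyPositive b)
    (hs : IsSelfAdjoint s) :
    s ≤ ‖b ^ (-(1 / 2) : ℝ) * s * b ^ (-(1 / 2) : ℝ)‖ • b := by
  have hr : IsSelfAdjoint (b ^ (1 / 2 : ℝ)) := .of_nonneg CFC.rpow_nonneg
  have hra : b ^ (1 / 2 : ℝ) * b ^ (-(1 / 2) : ℝ) = 1 := by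
    rw [← CFC.rpow_add hb.isUnit]; norm_num [CFC.rpow_zero b hb.nonneg]
  have har : b ^ (-(1 / 2) : ℝ) * b ^ (1 / 2 : ℝ) = 1 := by
    rw [← CFC.rpow_add hb.isUnit]; norm_num [CFC.rpow_zero b hb.nonneg]
  have hrr : b ^ (1 / 2 : ℝ) * b ^ (1 / 2 : ℝ) = b := by
    rw [← CFC.rpow_add hb.isUnit]; norm_num [CFC.rpow_one b hb.nonneg]
  have hconj : s = star (b ^ (1 / 2 : ℝ)) * (b ^ (-(1 / 2) : ℝ) * s * b ^ (-(1 / 2) : ℝ)) *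
      b ^ (1 / 2 : ℝ) := by
    simp only [hr.star_eq, ← mul_assoc, hra, one_mul]
    rw [mul_assoc, har, mul_one]
  calc s = _ := hconj
    _ ≤ _ := CStarAlgebra.star_left_conjugate_le_norm_smul
      (hs.conjugate_self (.of_nonneg CFC.rpow_nonneg))
    _ = _ := by rw [hr.star_eq, hrr]

lemma le_smul_of_norm_conjugate_le {c s : A} {K : ℝ} (hc : 0 ≤ c) (hs : IsSelfAdjoint s)
    (hK : 0 ≤ K) (h : ∀ a : A, 0 ≤ a → ‖star a * s * a‖ ≤ K * ‖star a * c * a‖) :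
    s ≤ K • c := by
  nontriviality A
  have hle : ∀ ε > (0 : ℝ), s ≤ K • (c + algebraMap ℝ A ε) := by
    intro ε hε
    set b := c + algebraMap ℝ A ε
    have hb : IsStrictlyPositive b := .nonneg_add hc (isStrictlyPositive_algebraMap hε)
    set a := b ^ (-(1 / 2) : ℝ)
    have ha : 0 ≤ a := CFC.rpow_nonneg
    have hca : ‖a * c * a‖ ≤ 1 := by
      calc ‖a * c * a‖ ≤ ‖a * b * a‖ := by
            refine CStarAlgebra.norm_le_norm_of_nonneg_of_le (conjugate_nonneg_of_nonneg hc ha) ?_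
            exact conjugate_le_conjugate_of_nonneg
              (le_add_of_nonneg_right (isStrictlyPositive_algebraMap hε).nonneg) ha
        _ = 1 := by rw [CFC.conjugate_rpow_neg_one_half b hb, norm_one]
    have hsa : ‖a * s * a‖ ≤ K := by
      have := h a ha
      rw [ha.isSelfAdjoint.star_eq] at this
      exact this.trans (mul_le_of_le_one_right hK hca)
    exact (le_norm_conjugate_rpow_neg_one_half_smul hb hs).trans
      (smul_le_smul_of_nonneg_right hsa hb.nonneg)
  have hlim : Filter.Tendsto (fun ε : ℝ => K • (c + algebraMap ℝ A ε)) (nhdsWithin 0 (Set.Ioi 0))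
      (nhds (K • c)) := by
    have hcont : Continuous fun ε : ℝ => K • (c + algebraMap ℝ A ε) := by fun_prop
    simpa using (hcont.tendsto 0).mono_left nhdsWithin_le_nhds
  exact ge_of_tendsto hlim (eventually_nhdsWithin_of_forall hle)

lemma smul_le_of_mul_norm_conjugate_le {c s : A} {K : ℝ} (hK : 0 < K) (hc : 0 ≤ c)
    (hs : IsSelfAdjoint s) (h : ∀ a : A, 0 ≤ a → K * ‖star a * s * a‖ ≤ ‖star a * c * a‖) :
    K • s ≤ c := by
  have hs_le : s ≤ K⁻¹ • c := le_smul_of_norm_conjugate_le hc hs (inv_nonneg.mpr hK.le)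
    fun a ha => by rw [inv_mul_eq_div, le_div_iff₀' hK]; exact h a ha
  simpa [smul_smul, hK.ne'] using smul_le_smul_of_nonneg_left hs_le hK.le

namespace RightCStarModule

variable {R E : Type*} [NonUnitalSemiring R] [StarRing R] [Module ℂ R] [PartialOrder R] [Norm R]
  [AddCommGroup E] [Module ℂ E] [Norm E] [SMul Rᵐᵒᵖ E] [RightCStarModule R E]

lemma inner_op_smul_left {a : R} {x y : E} : inner R (x <• a) y = star a * inner R x y := by
  rw [← star_inner y, inner_op_smul_right, star_mul, star_inner]

lemma inner_self_op_smul {a : R} {x : E} :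
    inner R (x <• a) (x <• a) = star a * inner R x x * a := by
  rw [inner_op_smul_left, inner_op_smul_right, mul_assoc]

end RightCStarModule

lemma integral_inner_op_smul_mul_inner_op_smul {R E Ω : Type*} [CStarAlgebra R] [PartialOrder R]
    [AddCommGroup E] [Module ℂ E] [Norm E] [SMul Rᵐᵒᵖ E] [RightCStarModule R E]
    [MeasurableSpace Ω] (μ : Measure Ω) (F : Ω → E) {f : E}
    (hf : Integrable (fun ω => inner R f (F ω) * inner R (F ω) f) μ) (a : R) :
    ∫ ω, inner R (f <• a) (F ω) * inner R (F ω) (f <• a) ∂μ =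
      star a * (∫ ω, inner R f (F ω) * inner R (F ω) f ∂μ) * a := by
  have hconj (ω : Ω) : inner R (f <• a) (F ω) * inner R (F ω) (f <• a) =
      star a * (inner R f (F ω) * inner R (F ω) f) * a := by
    simp only [RightCStarModule.inner_op_smul_left, RightCStarModule.inner_op_smul_right, mul_assoc]
  simp_rw [hconj]
  rw [integral_mul_const_of_integrable (hf.const_mul _), integral_const_mul_of_integrable hf]

lemma integral_inner_mul_inner_nonneg {E : Type*} [AddCommGroup E] [Module ℂ E] [Norm E]
    [SMul Aᵐᵒᵖ E] [RightCStarModule A E] (μ : Measure Ω) (F : Ω → E) (f : E) :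
    0 ≤ ∫ ω, ⟪f, F ω⟫ * ⟪F ω, f⟫ ∂μ :=
  integral_nonneg fun ω => by
    simpa [RightCStarModule.star_inner] using star_mul_self_nonneg ⟪F ω, f⟫

theorem frame_iff_norm_bounds_general (μ : Measure Ω) (F : Ω → U)
    (hint : ∀ f : U, Integrable (fun ω => ⟪f, F ω⟫ * ⟪F ω, f⟫) μ) :
    (∃ A₀ > (0 : ℝ), ∃ B > (0 : ℝ), ∀ f : U,
        A₀ • ⟪f, f⟫ ≤ (∫ ω, ⟪f, F ω⟫ * ⟪F ω, f⟫ ∂μ) ∧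
        (∫ ω, ⟪f, F ω⟫ * ⟪F ω, f⟫ ∂μ) ≤ B • ⟪f, f⟫) ↔
      ∃ A₁ > (0 : ℝ), ∃ B₁ > (0 : ℝ), ∀ f : U,
        A₁ * ‖⟪f, f⟫‖ ≤ ‖∫ ω, ⟪f, F ω⟫ * ⟪F ω, f⟫ ∂μ‖ ∧
        ‖∫ ω, ⟪f, F ω⟫ * ⟪F ω, f⟫ ∂μ‖ ≤ B₁ * ‖⟪f, f⟫‖ := by
  have hS := integral_inner_mul_inner_nonneg (A := A) μ F
  have hff (f : U) : 0 ≤ ⟪f, f⟫ := RightCStarModule.inner_self_nonneg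
  constructor
  · rintro ⟨A₀, hA₀, B, hB, h⟩
    exact ⟨A₀, hA₀, B, hB, fun f =>
      ⟨mul_norm_le_norm_of_smul_le hA₀.le (hff f) (h f).1,
        norm_le_mul_norm_of_le_smul hB.le (hS f) (h f).2⟩⟩
  · rintro ⟨A₁, hA₁, B₁, hB₁, h⟩
    have hconj (f : U) (a : A) := h (f <• a)
    simp only [RightCStarModule.inner_self_op_smul,
      integral_inner_op_smul_mul_inner_op_smul μ F (hint _)] at hconj
    exact ⟨A₁, hA₁, B₁, hB₁, fun f =>
      ⟨smul_le_of_mul_norm_conjugate_le hA₁ (hS f) (.of_nonneg (hff f)) fun a _ => (hconj f a).1,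
        le_smul_of_norm_conjugate_le (hff f) (.of_nonneg (hS f)) hB₁.le fun a _ => (hconj f a).2⟩⟩

/-- A weakly measurable `F : Ω → U` is a continuous frame iff there are `A₁, B₁ > 0`
with `A₁‖⟨f,f⟩‖ ≤ ‖∫ ⟨f,F(ω)⟩⟨F(ω),f⟩ dμ‖ ≤ B₁‖⟨f,f⟩‖` for all `f`. -/
theorem frame_iff_norm_bounds (μ : Measure Ω) (F : Ω → U)
    (hmeas : ∀ f : U, StronglyMeasurable fun ω => ⟪f, F ω⟫)
    (hint : ∀ f : U, Integrable (fun ω => ⟪f, F ω⟫ * ⟪F ω, f⟫) μ) :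
    (∃ A₀ > (0 : ℝ), ∃ B > (0 : ℝ), ∀ f : U,
        A₀ • ⟪f, f⟫ ≤ (∫ ω, ⟪f, F ω⟫ * ⟪F ω, f⟫ ∂μ) ∧
        (∫ ω, ⟪f, F ω⟫ * ⟪F ω, f⟫ ∂μ) ≤ B • ⟪f, f⟫) ↔
      ∃ A₁ > (0 : ℝ), ∃ B₁ > (0 : ℝ), ∀ f : U,
        A₁ * ‖⟪f, f⟫‖ ≤ ‖∫ ω, ⟪f, F ω⟫ * ⟪F ω, f⟫ ∂μ‖ ∧
        ‖∫ ω, ⟪f, F ω⟫ * ⟪F ω, f⟫ ∂μ‖ ≤ B₁ * ‖⟪f, f⟫‖ :=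
  frame_iff_norm_bounds_general μ F hint
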